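/- Let C be a noncatastrophic convolutional code in F[x]^n of rank k. Then d_r(C) ≤ d^r(C) for every 1 ≤ r ≤ k, i.e., the r-th generalized weight is at most the r-generalized column distance. Moreover, d_1(C) = d^1(C) = d_free(C). -/

import Mathlib

open Polynomial

namespace ConvCode

variable {F : Type*} [Field F] [Fintype F] {n k : ℕ}

/-- Weight of a polynomial vector: total number of nonzero coefficients. -/
noncomputable def wtv (c : Fin n → Polynomial F) : ℕ := ∑ ℓ, (c ℓ).support.card

/-- Truncation of a polynomial, keeping the coefficients of degrees `h` through `j`. -/
noncomputable def truncp (h j : ℕ) (p : Polynomial F) : Polynomial F :=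
  ∑ i ∈ Finset.Icc h j, Polynomial.C (p.coeff i) * Polynomial.X ^ i

/-- Truncation `c_{[h,j]}` of a polynomial vector. -/
noncomputable def truncv (h j : ℕ) (c : Fin n → Polynomial F) : Fin n → Polynomial F :=
  fun ℓ => truncp h j (c ℓ)

/-- Degree of a polynomial vector: the largest `i` such that `c[i] ≠ 0`. -/
def degv (c : Fin n → Polynomial F) : ℕ := Finset.univ.sup fun ℓ => (c ℓ).natDegree

/-- `φ` is a `j`-equivalence: it preserves weights of `j`-th truncations. -/
def IsJEquiv (C1 C2 : Submodule (Polynomial F) (Fin n → Polynomial F))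
    (φ : C1 ≃ₗ[Polynomial F] C2) (j : ℕ) : Prop :=
  ∀ c : C1, wtv (truncv 0 j (c : Fin n → Polynomial F)) =
    wtv (truncv 0 j ((φ c : C2) : Fin n → Polynomial F))

/-- `φ` is an equivalence: it is a `j`-equivalence for every `j`. -/
def IsEquiv (C1 C2 : Submodule (Polynomial F) (Fin n → Polynomial F))
    (φ : C1 ≃ₗ[Polynomial F] C2) : Prop := ∀ j : ℕ, IsJEquiv C1 C2 φ j

/-- `φ` is an isometry: it preserves weights. -/
def IsIsometry (C1 C2 : Submodule (Polynomial F) (Fin n → Polynomial F))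
    (φ : C1 ≃ₗ[Polynomial F] C2) : Prop :=
  ∀ c : C1, wtv (c : Fin n → Polynomial F) = wtv ((φ c : C2) : Fin n → Polynomial F)

/-- `G` is a generator matrix of `C`: its rows form an `F[x]`-basis of `C`. -/
def IsGenMat (C : Submodule (Polynomial F) (Fin n → Polynomial F))
    (G : Matrix (Fin k) (Fin n) (Polynomial F)) : Prop :=
  LinearIndependent (Polynomial F) (fun i => G i) ∧
    Submodule.span (Polynomial F) (Set.range fun i => G i) = C

/-- `G` is row reduced: its leading row coefficient matrix has full rank. -/
def RowReduced (G : Matrix (Fin k) (Fin n) (Polynomial F)) : Prop :=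
  LinearIndependent F (fun i => fun ℓ => (G i ℓ).coeff (degv (G i)))

/-- `C` is noncatastrophic: it has a generator matrix with a polynomial right inverse
whose constant term has rank `k`. -/
def Noncatastrophic (C : Submodule (Polynomial F) (Fin n → Polynomial F)) (k : ℕ) : Prop :=
  ∃ G : Matrix (Fin k) (Fin n) (Polynomial F), IsGenMat C G ∧
    (∃ H : Matrix (Fin n) (Fin k) (Polynomial F), G * H = 1) ∧
    LinearIndependent F (fun i => fun ℓ => (G i ℓ).eval 0)

/-- Joint support of a family of polynomial vectors: the pairs `(ℓ, i)` such that the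
coefficient of `x^i` in the `ℓ`-th coordinate of some member is nonzero. -/
def gsupp {r : ℕ} (d : Fin r → Fin n → Polynomial F) : Set (Fin n × ℕ) :=
  { q | ∃ s, ((d s) q.1).coeff q.2 ≠ 0 }

/-- The `(r,j)`-generalized column distance of the code generated by `G`. -/
noncomputable def gcdJ (G : Matrix (Fin k) (Fin n) (Polynomial F)) (r j : ℕ) : ℕ :=
  sInf { m | ∃ p : Fin r → Fin k → Polynomial F,
    LinearIndependent F (fun s => fun l => (p s l).eval 0) ∧
    m = (gsupp fun s => truncv 0 j (Matrix.vecMul (p s) G)).ncard }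

/-- The `r`-generalized column distance: the limit as `j → ∞` of the `(r,j)`-generalized
column distances. -/
noncomputable def gcdLim (G : Matrix (Fin k) (Fin n) (Polynomial F)) (r : ℕ) : ℕ :=
  Filter.limsup (fun j => gcdJ G r j) Filter.atTop

/-- Evaluation at `0`, as an `F`-linear map `F[x]^n → F^n`. -/
noncomputable def ev0 : (Fin n → Polynomial F) →ₗ[F] (Fin n → F) :=
  LinearMap.pi fun ℓ => (Polynomial.aeval (0 : F)).toLinearMap.comp (LinearMap.proj ℓ)

/-- `C[0] = {c(0) : c ∈ C} ⊆ F^n`. -/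
noncomputable def evalZero (C : Submodule (Polynomial F) (Fin n → Polynomial F)) :
    Submodule F (Fin n → F) := (C.restrictScalars F).map ev0

/-- The `r`-th generalized Hamming weight of a block code `L ⊆ F^n`. -/
noncomputable def hammingGW (L : Submodule F (Fin n → F)) (r : ℕ) : ℕ :=
  sInf { m | ∃ V : Submodule F (Fin n → F), V ≤ L ∧ Module.finrank F V = r ∧
    m = { ℓ : Fin n | ∃ v ∈ V, v ℓ ≠ 0 }.ncard }

/-- The `r`-th generalized weight of a convolutional code. -/
noncomputable def genWt (C : Submodule (Polynomial F) (Fin n → Polynomial F)) (r : ℕ) : ℕ :=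
  sInf { m | ∃ d : Fin r → Fin n → Polynomial F, (∀ s, d s ∈ C) ∧
    (r : Cardinal) ≤ Module.rank (Polynomial F)
      ↥(Submodule.span (Polynomial F) (Set.range d)) ∧
    m = (gsupp d).ncard }

/-- The free distance of a convolutional code. -/
noncomputable def dfree (C : Submodule (Polynomial F) (Fin n → Polynomial F)) : ℕ :=
  sInf { m | ∃ c : Fin n → Polynomial F, c ∈ C ∧ c ≠ 0 ∧ m = wtv c }

end ConvCode

/-!
A noncatastrophic code has a generator matrix `G` with a polynomial right inverse `H`, so the
codewords are exactly the vectors `c` with `c H G = c`. Let `μ` bound the degrees of `H G` and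
`B` bound all `d_j^r`. For `j` large, take `p_1, …, p_r` realising `d_j^r`: the truncated
codewords `(p_s G)_{[0,j]}` have at most `B` support positions, so by pigeonhole some window
of degrees `a + 1, …, a + μ` below `j` misses all of them. The truncations `(p_s G)_{[0,a]}` are
then still codewords, and their messages have the same constant terms as the `p_s`, so they span a
submodule of rank `r`; hence `d_r ≤ d_j^r ≤ d^r`. For `r = 1`, dividing the message of a nonzero
codeword by the largest power of `x` it is divisible by gives a message with nonzero constant term
and a codeword of the same weight, so `d^1 ≤ d_free ≤ d_1`.
-/

namespace Polynomial

variable {R : Type*}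

theorem card_support_X_pow_mul [Semiring R] (m : ℕ) (p : R[X]) :
    (X ^ m * p).support.card = p.support.card := by
  have hsupp : (X ^ m * p).support = p.support.map (addRightEmbedding m) := by
    ext i
    simp only [mem_support_iff, coeff_X_pow_mul', Finset.mem_map, addRightEmbedding_apply]
    constructor
    · intro h
      split_ifs at h with hm
      · exact ⟨i - m, h, by omega⟩
      · exact absurd rfl h
    · rintro ⟨i, hi, rfl⟩
      simpa using hi
  rw [hsupp, Finset.card_map]

theorem eq_zero_of_X_pow_dvd_of_natDegree_lt [Semiring R] {p : R[X]} {N : ℕ} (hdvd : X ^ N ∣ p)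
    (hdeg : p.natDegree < N) : p = 0 := by
  ext d
  rcases lt_or_ge d N with hd | hd
  · exact X_pow_dvd_iff.mp hdvd d hd
  · exact coeff_eq_zero_of_natDegree_lt (by omega)

theorem exists_eq_X_pow_smul_of_ne_zero [CommSemiring R] {ι : Type*} {q : ι → R[X]}
    (hq : q ≠ 0) :
    ∃ (m : ℕ) (b : ι → R[X]), q = (X : R[X]) ^ m • b ∧ (fun l => (b l).eval (0 : R)) ≠ 0 := by
  have hex : ∃ m, ∃ l, ¬ X ^ (m + 1) ∣ q l := by
    obtain ⟨l, hl⟩ := Function.ne_iff.mp hq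
    exact ⟨(q l).natDegree, l, fun h => hl (eq_zero_of_X_pow_dvd_of_natDegree_lt h (by omega))⟩
  classical
  set m := Nat.find hex
  have hdvd : ∀ l, X ^ m ∣ q l := by
    rcases hm : m with _ | m'
    · simp
    · have := Nat.find_min hex (show m' < m by omega)
      push Not at this
      exact this
  choose b hb using hdvd
  refine ⟨m, b, _root_.funext hb, fun h0 => ?_⟩
  obtain ⟨l, hl⟩ := Nat.find_spec hex
  refine hl ?_
  rw [hb l, pow_succ]
  exact mul_dvd_mul_left _ (X_dvd_iff.mpr (by simpa [coeff_zero_eq_eval_zero] using congrFun h0 l))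

/-- Every coefficient of a relation `∑ g_s p_s = 0` is divisible by all powers of `X`: cancel
`X ^ N` and evaluate at `0`. -/
theorem linearIndependent_of_linearIndependent_eval_zero [CommRing R] {ι κ : Type*} [Fintype ι]
    {p : ι → κ → R[X]} (hp : LinearIndependent R fun s l => (p s l).eval 0) :
    LinearIndependent R[X] p := by
  rw [Fintype.linearIndependent_iff] at hp ⊢
  intro g hg
  have hdvd : ∀ N s, X ^ N ∣ g s := by
    intro N
    induction N with
    | zero => simp
    | succ N ih =>
      choose b hb using ih
      have hb0 : ∑ s, b s • p s = 0 := by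
        funext l
        apply (isRegular_X_pow (R := R) N).left
        have := congrFun hg l
        simp only [Finset.sum_apply, Pi.smul_apply, smul_eq_mul, hb, Pi.zero_apply] at this ⊢
        rw [mul_zero, Finset.mul_sum, ← this]
        exact Finset.sum_congr rfl fun s _ => (mul_assoc _ _ _).symm
      have hb0' := hp (fun s => (b s).eval 0) (by
        funext l
        simpa [Finset.sum_apply, eval_finsetSum] using congrArg (eval 0) (congrFun hb0 l))
      intro s
      rw [hb s, pow_succ]
      exact mul_dvd_mul_left _ (X_dvd_iff.mpr (by simpa [coeff_zero_eq_eval_zero] using hb0' s))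
  exact fun s => eq_zero_of_X_pow_dvd_of_natDegree_lt (hdvd _ s) (Nat.lt_succ_self _)

end Polynomial

namespace Matrix

variable {R m n : Type*} [Fintype m]

theorem dvd_vecMul_apply [CommSemiring R] {a : R} {v : m → R} (hv : ∀ i, a ∣ v i)
    (M : Matrix m n R) (j : n) : a ∣ (v ᵥ* M) j :=
  Finset.dvd_sum fun i _ => (hv i).mul_right _

theorem natDegree_vecMul_apply_le [Semiring R] {v : m → R[X]} {M : Matrix m n R[X]} {a μ : ℕ}
    (hv : ∀ i, (v i).natDegree ≤ a) (hM : ∀ i j, (M i j).natDegree ≤ μ) (j : n) :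
    ((v ᵥ* M) j).natDegree ≤ a + μ :=
  natDegree_sum_le_of_forall_le _ _ fun i _ =>
    natDegree_mul_le.trans (add_le_add (hv i) (hM i j))

end Matrix

theorem Submodule.natCast_le_rank_span {R M : Type*} [Ring R] [StrongRankCondition R]
    [AddCommGroup M] [Module R M] {r : ℕ} {v : Fin r → M} (hv : LinearIndependent R v) :
    (r : Cardinal) ≤ Module.rank R (span R (Set.range v)) := by
  have := nontrivial_of_invariantBasisNumber R
  have hcard := Cardinal.mk_range_eq_of_injective hv.injective
  rw [Cardinal.mk_fin, Cardinal.lift_natCast, Cardinal.lift_eq_nat_iff] at hcard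
  rw [rank_span hv, hcard]

theorem Submodule.exists_ne_zero_of_one_le_rank_span {R M ι : Type*} [Ring R] [Nontrivial R]
    [AddCommGroup M] [Module R M] {v : ι → M} (hv : 1 ≤ Module.rank R (span R (Set.range v))) :
    ∃ i, v i ≠ 0 := by
  by_contra! h
  rw [span_eq_bot.mpr (by rintro _ ⟨i, rfl⟩; exact h i), rank_bot] at hv
  exact zero_lt_one.not_ge hv

/-- Pigeonhole over the `D.ncard + 1` blocks `[t (μ + 1), (t + 1) (μ + 1))`: one of them
misses `D`. -/
theorem Set.Finite.exists_gap {D : Set ℕ} (hD : D.Finite) (μ : ℕ) :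
    ∃ a ≤ D.ncard * (μ + 1), ∀ i, a < i → i ≤ a + μ → i ∉ D := by
  classical
  obtain ⟨t, ht, htD⟩ := Finset.exists_mem_notMem_of_card_lt_card
    (s := hD.toFinset.image (· / (μ + 1))) (t := Finset.range (D.ncard + 1)) (by
      rw [Finset.card_range, Set.ncard_eq_toFinset_card D hD]
      exact Nat.lt_succ_of_le Finset.card_image_le)
  refine ⟨t * (μ + 1), Nat.mul_le_mul_right _ (Nat.lt_succ_iff.mp (Finset.mem_range.mp ht)),
    fun i hi1 hi2 hiD => htD (Finset.mem_image.mpr ⟨i, hD.mem_toFinset.mpr hiD, ?_⟩)⟩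
  exact Nat.div_eq_of_lt_le hi1.le (by rw [add_mul]; omega)

namespace ConvCode

open Matrix

variable {F : Type*} [Field F] {n k r : ℕ}

theorem coeff_truncp_zero (j i : ℕ) (p : F[X]) :
    (truncp 0 j p).coeff i = if i ≤ j then p.coeff i else 0 := by
  simp only [truncp, finsetSum_coeff, coeff_C_mul, coeff_X_pow, mul_ite, mul_one, mul_zero,
    Finset.sum_ite_eq, Finset.mem_Icc, zero_le, true_and]

theorem natDegree_truncp_zero_le (j : ℕ) (p : F[X]) : (truncp 0 j p).natDegree ≤ j :=
  natDegree_le_iff_coeff_eq_zero.mpr fun i hi => by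
    rw [coeff_truncp_zero, if_neg (by exact_mod_cast hi.not_ge)]

theorem eval_zero_truncp_zero (j : ℕ) (p : F[X]) : (truncp 0 j p).eval 0 = p.eval 0 := by
  rw [← coeff_zero_eq_eval_zero, ← coeff_zero_eq_eval_zero, coeff_truncp_zero,
    if_pos (Nat.zero_le j)]

theorem X_pow_dvd_sub_truncp_zero {p : F[X]} {a N : ℕ}
    (hgap : ∀ i, a < i → i ≤ N → p.coeff i = 0) : X ^ (N + 1) ∣ p - truncp 0 a p := by
  refine X_pow_dvd_iff.mpr fun i hi => ?_
  rw [coeff_sub, coeff_truncp_zero]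
  split_ifs with hia
  · exact sub_self _
  · rw [hgap i (by omega) (by omega), sub_zero]

theorem wtv_X_pow_smul (m : ℕ) (c : Fin n → F[X]) : wtv ((X : F[X]) ^ m • c) = wtv c := by
  simp only [wtv, Pi.smul_apply, smul_eq_mul, card_support_X_pow_mul]

/-- The error `c_{[0,a]} P - c_{[0,a]} = (c - c_{[0,a]}) - (c - c_{[0,a]}) P` is divisible by
`X ^ (a + μ + 1)` but has degree at most `a + μ`. -/
theorem truncv_vecMul_eq_self_of_gap {P : Matrix (Fin n) (Fin n) F[X]} {μ : ℕ}
    (hμ : ∀ i j, (P i j).natDegree ≤ μ) {c : Fin n → F[X]} (hc : c ᵥ* P = c) {a : ℕ}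
    (hgap : ∀ ℓ i, a < i → i ≤ a + μ → (c ℓ).coeff i = 0) :
    truncv 0 a c ᵥ* P = truncv 0 a c := by
  set c' := truncv 0 a c
  have htail : ∀ ℓ, X ^ (a + μ + 1) ∣ (c - c') ℓ :=
    fun ℓ => X_pow_dvd_sub_truncp_zero (hgap ℓ)
  have herr : c' ᵥ* P - c' = (c - c') - (c - c') ᵥ* P := by
    rw [sub_vecMul, hc]
    abel
  have hdeg : ∀ ℓ, (c' ℓ).natDegree ≤ a := fun ℓ => natDegree_truncp_zero_le a (c ℓ)
  refine sub_eq_zero.mp (funext fun ℓ =>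
    eq_zero_of_X_pow_dvd_of_natDegree_lt (N := a + μ + 1) ?_ ?_)
  · rw [herr]
    exact dvd_sub (htail ℓ) (dvd_vecMul_apply htail P ℓ)
  · refine Nat.lt_succ_of_le ((natDegree_sub_le _ _).trans (max_le ?_ ?_))
    · exact natDegree_vecMul_apply_le hdeg hμ ℓ
    · exact (hdeg ℓ).trans (by omega)

section GeneratorMatrix

variable {C : Submodule F[X] (Fin n → F[X])} {G : Matrix (Fin k) (Fin n) F[X]}

theorem IsGenMat.row_mem (hG : IsGenMat C G) (i : Fin k) : G i ∈ C :=
  hG.2 ▸ Submodule.subset_span ⟨i, rfl⟩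

theorem IsGenMat.vecMul_mem (hG : IsGenMat C G) (q : Fin k → F[X]) : q ᵥ* G ∈ C := by
  rw [vecMul_eq_sum]
  exact Submodule.sum_mem _ fun i _ => Submodule.smul_mem _ _ (hG.row_mem i)

theorem IsGenMat.exists_vecMul_eq (hG : IsGenMat C G) {c : Fin n → F[X]} (hc : c ∈ C) :
    ∃ q, q ᵥ* G = c := by
  rw [← hG.2, Submodule.mem_span_range_iff_exists_fun] at hc
  obtain ⟨q, hq⟩ := hc
  exact ⟨q, by rw [vecMul_eq_sum, hq]⟩

theorem IsGenMat.vecMul_injective (hG : IsGenMat C G) : Function.Injective G.vecMul :=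
  vecMul_injective_iff.mpr hG.1

theorem IsGenMat.exists_mul_eq (hG : IsGenMat C G) {G' : Matrix (Fin k) (Fin n) F[X]}
    (hG' : IsGenMat C G') : ∃ U : Matrix (Fin k) (Fin k) F[X], U * G = G' := by
  choose U hU using fun i => hG.exists_vecMul_eq (hG'.row_mem i)
  exact ⟨of U, funext hU⟩

/-- Two bases of `C` differ by an invertible matrix, so a right inverse of one generator matrix
transfers to every other. -/
theorem Noncatastrophic.exists_mul_eq_one (hNC : Noncatastrophic C k) (hG : IsGenMat C G) :
    ∃ H : Matrix (Fin n) (Fin k) F[X], G * H = 1 := by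
  obtain ⟨G₀, hG₀, ⟨H₀, hGH₀⟩, -⟩ := hNC
  obtain ⟨U, hU⟩ := hG₀.exists_mul_eq hG
  obtain ⟨V, hV⟩ := hG.exists_mul_eq hG₀
  have hVU : V * U = 1 := funext fun i => hG₀.vecMul_injective <|
    show (V * U) i ᵥ* G₀ = (1 : Matrix (Fin k) (Fin k) F[X]) i ᵥ* G₀ by
    rw [← mul_apply_eq_vecMul, ← mul_apply_eq_vecMul, Matrix.mul_assoc, hU, hV, Matrix.one_mul]
  refine ⟨H₀ * V, ?_⟩
  rw [← hU, Matrix.mul_assoc, ← Matrix.mul_assoc G₀, hGH₀, Matrix.one_mul,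
    mul_eq_one_comm.mp hVU]

end GeneratorMatrix

theorem gsupp_finite (d : Fin r → Fin n → F[X]) : (gsupp d).Finite := by
  obtain ⟨N, hN⟩ := Finite.exists_le fun q : Fin r × Fin n => (d q.1 q.2).natDegree
  refine (Set.finite_univ.prod (Set.finite_Iic N)).subset ?_
  rintro ⟨ℓ, i⟩ ⟨s, hs⟩
  exact ⟨trivial, (le_natDegree_of_ne_zero hs).trans (hN (s, ℓ))⟩

theorem mem_gsupp_truncv {d : Fin r → Fin n → F[X]} {j : ℕ} {q : Fin n × ℕ} :
    q ∈ gsupp (fun s => truncv 0 j (d s)) ↔ q.2 ≤ j ∧ q ∈ gsupp d := by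
  simp only [gsupp, truncv, Set.mem_ofPred_eq, coeff_truncp_zero, ne_eq, ite_eq_right_iff,
    not_forall, exists_prop, exists_and_left]

theorem gsupp_truncv_subset (d : Fin r → Fin n → F[X]) (j : ℕ) :
    gsupp (fun s => truncv 0 j (d s)) ⊆ gsupp d :=
  fun _ hq => (mem_gsupp_truncv.mp hq).2

theorem gsupp_truncv_mono (d : Fin r → Fin n → F[X]) {j j' : ℕ} (h : j ≤ j') :
    gsupp (fun s => truncv 0 j (d s)) ⊆ gsupp (fun s => truncv 0 j' (d s)) := fun _ hq =>
  mem_gsupp_truncv.mpr ⟨(mem_gsupp_truncv.mp hq).1.trans h, (mem_gsupp_truncv.mp hq).2⟩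

theorem ncard_gsupp_const (c : Fin n → F[X]) : (gsupp fun _ : Fin 1 => c).ncard = wtv c := by
  let e : gsupp (fun _ : Fin 1 => c) ≃ Σ ℓ, (c ℓ).support :=
    (Equiv.subtypeEquivRight fun q => by simp [gsupp]).trans
      (Equiv.subtypeProdEquivSigmaSubtype fun ℓ i => i ∈ (c ℓ).support)
  rw [← Nat.card_coe_set_eq, Nat.card_congr e, Nat.card_sigma]
  simp only [wtv, Nat.card_eq_fintype_card, Fintype.card_coe]

theorem exists_linearIndependent_eval_zero (hrk : r ≤ k) :
    ∃ p : Fin r → Fin k → F[X], LinearIndependent F fun s l => (p s l).eval 0 := by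
  refine ⟨fun s l => C ((Pi.single (Fin.castLE hrk s) 1 : Fin k → F) l), ?_⟩
  simp only [eval_C]
  exact (Pi.linearIndependent_single_one (Fin k) F).comp _ (Fin.castLE_injective hrk)

section ColumnDistance

variable (G : Matrix (Fin k) (Fin n) F[X])

theorem gcdJ_le_ncard_gsupp_truncv {p : Fin r → Fin k → F[X]}
    (hp : LinearIndependent F fun s l => (p s l).eval 0) (j : ℕ) :
    gcdJ G r j ≤ (gsupp fun s => truncv 0 j (p s ᵥ* G)).ncard := by
  unfold gcdJ
  exact Nat.sInf_le ⟨p, hp, rfl⟩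

theorem gcdJ_le_ncard_gsupp {p : Fin r → Fin k → F[X]}
    (hp : LinearIndependent F fun s l => (p s l).eval 0) (j : ℕ) :
    gcdJ G r j ≤ (gsupp fun s => p s ᵥ* G).ncard :=
  (gcdJ_le_ncard_gsupp_truncv G hp j).trans
    (Set.ncard_le_ncard (gsupp_truncv_subset _ j) (gsupp_finite _))

theorem exists_gcdJ_eq (hrk : r ≤ k) (j : ℕ) :
    ∃ p : Fin r → Fin k → F[X], LinearIndependent F (fun s l => (p s l).eval 0) ∧
      gcdJ G r j = (gsupp fun s => truncv 0 j (p s ᵥ* G)).ncard := by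
  obtain ⟨p, hp⟩ := exists_linearIndependent_eval_zero (F := F) hrk
  exact Nat.sInf_mem (s := {m | ∃ p : Fin r → Fin k → F[X],
    LinearIndependent F (fun s l => (p s l).eval 0) ∧
      m = (gsupp fun s => truncv 0 j (p s ᵥ* G)).ncard}) ⟨_, p, hp, rfl⟩

theorem gcdJ_mono (hrk : r ≤ k) : Monotone (gcdJ G r) := fun j j' h => by
  obtain ⟨p, hp, hval⟩ := exists_gcdJ_eq G hrk j'
  rw [hval]
  exact (gcdJ_le_ncard_gsupp_truncv G hp j).trans (Set.ncard_le_ncard (gsupp_truncv_mono _ h)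
    ((gsupp_finite _).subset (gsupp_truncv_subset _ j')))

theorem bddAbove_range_gcdJ (hrk : r ≤ k) : BddAbove (Set.range (gcdJ G r)) := by
  obtain ⟨p, hp⟩ := exists_linearIndependent_eval_zero (F := F) hrk
  exact bddAbove_def.mpr ⟨_, Set.forall_mem_range.mpr (gcdJ_le_ncard_gsupp G hp)⟩

theorem gcdLim_eq_iSup (hrk : r ≤ k) : gcdLim G r = ⨆ j, gcdJ G r j :=
  (tendsto_atTop_ciSup (gcdJ_mono G hrk) (bddAbove_range_gcdJ G hrk)).limsup_eq

theorem gcdJ_le_gcdLim (hrk : r ≤ k) (j : ℕ) : gcdJ G r j ≤ gcdLim G r :=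
  (gcdLim_eq_iSup G hrk).symm ▸ le_ciSup (bddAbove_range_gcdJ G hrk) j

end ColumnDistance

variable {C : Submodule F[X] (Fin n → F[X])} {G : Matrix (Fin k) (Fin n) F[X]}
  {H : Matrix (Fin n) (Fin k) F[X]}

theorem genWt_le_ncard_gsupp_truncv_of_gap (hG : IsGenMat C G) (hGH : G * H = 1) {μ : ℕ}
    (hμ : ∀ i j, ((H * G) i j).natDegree ≤ μ) {p : Fin r → Fin k → F[X]}
    (hp : LinearIndependent F fun s l => (p s l).eval 0) {a : ℕ}
    (hgap : ∀ s ℓ i, a < i → i ≤ a + μ → ((p s ᵥ* G) ℓ).coeff i = 0) :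
    genWt C r ≤ (gsupp fun s => truncv 0 a (p s ᵥ* G)).ncard := by
  have hfix : ∀ q : Fin k → F[X], q ᵥ* G ᵥ* (H * G) = q ᵥ* G := fun q => by
    rw [vecMul_vecMul, ← Matrix.mul_assoc, hGH, Matrix.one_mul]
  set d := fun s => truncv 0 a (p s ᵥ* G)
  have hd : ∀ s, d s ᵥ* H ᵥ* G = d s := fun s => by
    rw [vecMul_vecMul]
    exact truncv_vecMul_eq_self_of_gap hμ (hfix (p s)) (hgap s)
  have hconst : ∀ s l, ((d s ᵥ* H) l).eval 0 = (p s l).eval 0 := fun s l => by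
    have htrunc : evalRingHom 0 ∘ d s = evalRingHom 0 ∘ (p s ᵥ* G) :=
      funext fun ℓ => eval_zero_truncp_zero a _
    have h := RingHom.map_vecMul (evalRingHom (0 : F)) H (d s) l
    rwa [htrunc, ← RingHom.map_vecMul, vecMul_vecMul, hGH, vecMul_one] at h
  have hli : LinearIndependent F[X] fun s => d s ᵥ* H ᵥ* G :=
    (linearIndependent_of_linearIndependent_eval_zero (by simpa only [hconst] using hp)).map'
      G.vecMulLinear (LinearMap.ker_eq_bot.mpr hG.vecMul_injective)
  simp only [hd] at hli
  exact Nat.sInf_le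
    ⟨d, fun s => hd s ▸ hG.vecMul_mem _, Submodule.natCast_le_rank_span hli, rfl⟩

theorem genWt_le_gcdLim_of_mul_eq_one (hG : IsGenMat C G) (hGH : G * H = 1) (hrk : r ≤ k) :
    genWt C r ≤ gcdLim G r := by
  obtain ⟨μ, hμ⟩ := Finite.exists_le fun q : Fin n × Fin n => ((H * G) q.1 q.2).natDegree
  obtain ⟨B, hB⟩ := bddAbove_range_gcdJ G hrk
  set j := B * (μ + 1) + μ
  obtain ⟨p, hp, hpj⟩ := exists_gcdJ_eq G hrk j
  set T := gsupp fun s => truncv 0 j (p s ᵥ* G)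
  have hT : (Prod.snd '' T).Finite := (gsupp_finite _).image Prod.snd
  obtain ⟨a, haB, hgapT⟩ := hT.exists_gap μ
  have haj : a + μ ≤ j := by
    have := (Set.ncard_image_le (f := Prod.snd) (gsupp_finite _)).trans (hpj ▸ hB ⟨j, rfl⟩)
    have := haB.trans (Nat.mul_le_mul_right (μ + 1) this)
    omega
  have hgap : ∀ s ℓ i, a < i → i ≤ a + μ → ((p s ᵥ* G) ℓ).coeff i = 0 := by
    intro s ℓ i hai hiμ
    by_contra hne
    exact hgapT i hai hiμ ⟨(ℓ, i), mem_gsupp_truncv.mpr ⟨by omega, s, hne⟩, rfl⟩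
  calc genWt C r ≤ (gsupp fun s => truncv 0 a (p s ᵥ* G)).ncard :=
        genWt_le_ncard_gsupp_truncv_of_gap hG hGH (fun i j => hμ (i, j)) hp hgap
    _ ≤ T.ncard := Set.ncard_le_ncard (gsupp_truncv_mono _ (by omega)) (gsupp_finite _)
    _ = gcdJ G r j := hpj.symm
    _ ≤ gcdLim G r := gcdJ_le_gcdLim G hrk j

theorem gcdLim_one_le_wtv (hG : IsGenMat C G) (hk : 1 ≤ k) {c : Fin n → F[X]} (hc : c ∈ C)
    (hc0 : c ≠ 0) : gcdLim G 1 ≤ wtv c := by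
  obtain ⟨q, rfl⟩ := hG.exists_vecMul_eq hc
  have hq : q ≠ 0 := by
    rintro rfl
    exact hc0 (zero_vecMul G)
  obtain ⟨m, b, rfl, hb⟩ := exists_eq_X_pow_smul_of_ne_zero hq
  rw [gcdLim_eq_iSup G hk, smul_vecMul, wtv_X_pow_smul, ← ncard_gsupp_const]
  exact ciSup_le (gcdJ_le_ncard_gsupp G (p := fun _ => b) (linearIndependent_unique_iff.mpr hb))

theorem gcdLim_one_le_dfree (hG : IsGenMat C G) (hk : 1 ≤ k) {c : Fin n → F[X]} (hc : c ∈ C)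
    (hc0 : c ≠ 0) : gcdLim G 1 ≤ dfree C := by
  refine le_csInf ⟨_, c, hc, hc0, rfl⟩ ?_
  rintro _ ⟨c', hc', hc'0, rfl⟩
  exact gcdLim_one_le_wtv hG hk hc' hc'0

theorem dfree_le_genWt_one {c : Fin n → F[X]} (hc : c ∈ C) (hc0 : c ≠ 0) :
    dfree C ≤ genWt C 1 := by
  refine csInf_le_csInf (OrderBot.bddBelow _) ⟨_, fun _ => c, fun _ => hc,
    Submodule.natCast_le_rank_span (linearIndependent_unique_iff.mpr hc0), rfl⟩ ?_
  rintro _ ⟨d, hdC, hrank, rfl⟩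
  obtain ⟨s, hs⟩ := Submodule.exists_ne_zero_of_one_le_rank_span (by exact_mod_cast hrank)
  obtain rfl := Subsingleton.elim s 0
  have hd : d = fun _ => d 0 := funext fun s => congrArg d (Subsingleton.elim s 0)
  exact ⟨d 0, hdC 0, hs, by rw [hd, ncard_gsupp_const]⟩

end ConvCode

open ConvCode
theorem genWt_le_gcdLim_general {F : Type*} [Field F] {n k : ℕ}
    (C : Submodule (Polynomial F) (Fin n → Polynomial F))
    (hk : 1 ≤ k) (hNC : Noncatastrophic C k)
    (G : Matrix (Fin k) (Fin n) (Polynomial F)) (hG : IsGenMat C G) :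
    (∀ r : ℕ, 1 ≤ r → r ≤ k → genWt C r ≤ gcdLim G r) ∧
    genWt C 1 = gcdLim G 1 ∧ gcdLim G 1 = dfree C := by
  obtain ⟨H, hGH⟩ := hNC.exists_mul_eq_one hG
  have hgen : ∀ r, 1 ≤ r → r ≤ k → genWt C r ≤ gcdLim G r := fun r _ hrk =>
    genWt_le_gcdLim_of_mul_eq_one hG hGH hrk
  have hrow : G ⟨0, hk⟩ ∈ C := hG.row_mem _
  have hrow0 : G ⟨0, hk⟩ ≠ 0 := hG.1.ne_zero _
  have h1 := hgen 1 le_rfl hk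
  have h2 := gcdLim_one_le_dfree hG hk hrow hrow0
  have h3 := dfree_le_genWt_one hrow hrow0
  exact ⟨hgen, by omega, by omega⟩

/-- for a noncatastrophic code, `d_r(C) ≤ d^r(C)` for `1 ≤ r ≤ k`, and
`d_1(C) = d^1(C) = d_free(C)`. -/
theorem genWt_le_gcdLim {F : Type*} [Field F] [Fintype F] {n k : ℕ}
    (C : Submodule (Polynomial F) (Fin n → Polynomial F))
    (hk : 1 ≤ k) (hkn : k ≤ n) (hNC : Noncatastrophic C k)
    (G : Matrix (Fin k) (Fin n) (Polynomial F)) (hG : IsGenMat C G) :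
    (∀ r : ℕ, 1 ≤ r → r ≤ k → genWt C r ≤ gcdLim G r) ∧
    genWt C 1 = gcdLim G 1 ∧ gcdLim G 1 = dfree C :=
  genWt_le_gcdLim_general C hk hNC G hG
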